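/- For any matroid M on a finite set S and any subset U ⊆ S, the following inequalities hold in the rank-preserving weak order on matroids on S: M|U ⊕ M/U ≤ M ≤ M|U □ M/U, where M|U is the restriction to U, M/U is the contraction by U, ⊕ is direct sum, and □ is free product. -/

import Mathlib

open Matroid

variable {α : Type*}

/-- The contraction `M / C` of a matroid by a set, defined as the dual of the
deletion (restriction to the complement) of the dual. Its ground set is `M.E \ C`. -/
def Matroid.con (M : Matroid α) (C : Set α) : Matroid α := (M✶ ↾ (M.E \ C))✶

/-- The rank `ρ(M)` of a matroid (as a value in `ℕ∞`): the common cardinality of its bases. -/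
noncomputable def Matroid.erank (M : Matroid α) : ℕ∞ := ⨆ B ∈ {B | M.IsBase B}, B.encard

/-- The rank function `ρ_M(X)` of a matroid: the rank of the restriction to `X`. -/
noncomputable def Matroid.rnk (M : Matroid α) (X : Set α) : ℕ∞ := (M ↾ X).erank

/-- `IsFreeProduct M N P` says that `P` is the free product `M □ N`: its ground set is
`M.E ∪ N.E`, and its bases are exactly the sets `B ⊆ M.E ∪ N.E` of cardinality
`ρ(M) + ρ(N)` such that `B ∩ M.E` is independent in `M` and `B ∩ N.E` spans `N`. -/
def IsFreeProduct (M N P : Matroid α) : Prop :=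
  P.E = M.E ∪ N.E ∧ ∀ B : Set α,
    (P.IsBase B ↔ B ⊆ M.E ∪ N.E ∧ B.encard = M.erank + N.erank ∧
      M.Indep (B ∩ M.E) ∧ N.Spanning (B ∩ N.E))

/-- The rank-preserving weak order on matroids: `M ≤ N` iff `M` and `N` have the same
ground set and every base of `M` is a base of `N`. -/
def weakLE (M N : Matroid α) : Prop := M.E = N.E ∧ ∀ B, M.IsBase B → N.IsBase B

/-! If `I` is a basis of `U`, the bases of `M ／ U` are exactly the sets `K` disjoint from `U`
with `K ∪ I` a base of `M`, since independence and spanning in `M ／ U` are read off from `M`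
after adding `I`. Hence a base of `M ↾ U ⊕ M ／ U` glues to a base of `M`, and
`r(M ↾ U) + r(M ／ U) = r(M)`; a base `B` of `M` therefore has the right size for the free
product, `B ∩ U` is independent in `M ↾ U`, and `B \ U` spans `M ／ U` because `B` spans `M`. -/

open Set

namespace Matroid

variable {M F : Matroid α} {I X B : Set α}

lemma erank_eq_eRank (M : Matroid α) : M.erank = M.eRank := by
  rw [erank, eRank, iSup_subtype']
  rfl

lemma IsBasis.spanning_union_iff (hI : M.IsBasis I X) :
    M.Spanning (B ∪ I) ↔ M.Spanning (B ∪ X) := by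
  simp_rw [spanning_iff, closure_union_congr_right hI.closure_eq_closure, union_subset_iff,
    and_iff_left hI.subset_ground, and_iff_left hI.indep.subset_ground]

lemma IsBasis.contract_isBase_iff (hI : M.IsBasis I X) :
    (M ／ X).IsBase B ↔ M.IsBase (B ∪ I) ∧ Disjoint B X := by
  constructor
  · intro hB
    obtain ⟨hBI, hXB⟩ := hI.contract_indep_iff.1 hB.indep
    obtain ⟨hBX, -⟩ := (contract_spanning_iff hI.subset_ground).1 hB.spanning
    exact ⟨hBI.isBase_of_spanning (hI.spanning_union_iff.2 hBX), hXB.symm⟩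
  · rintro ⟨hBI, hBX⟩
    refine Indep.isBase_of_spanning (hI.contract_indep_iff.2 ⟨hBI.indep, hBX.symm⟩) ?_
    exact (contract_spanning_iff hI.subset_ground).2 ⟨hI.spanning_union_iff.1 hBI.spanning, hBX⟩

lemma eRk_add_eRank_contract (hX : X ⊆ M.E) : M.eRk X + (M ／ X).eRank = M.eRank := by
  obtain ⟨I, hI⟩ := M.exists_isBasis X
  obtain ⟨B, hB, rfl⟩ := hI.exists_isBase
  have hBX : (M ／ X).IsBase (B \ X) :=
    hI.contract_isBase_iff.2 ⟨by rwa [sdiff_union_inter], disjoint_sdiff_left⟩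
  rw [← hI.encard_eq_eRk, ← hBX.encard_eq_eRank, ← hB.encard_eq_eRank,
    ← encard_union_eq (disjoint_sdiff_right.mono_left inter_subset_right), inter_union_sdiff]

lemma disjointSum_restrict_contract_weakLE (hX : X ⊆ M.E)
    (hdis : Disjoint (M ↾ X).E (M ／ X).E) : weakLE ((M ↾ X).disjointSum (M ／ X) hdis) M := by
  refine ⟨by simp [union_sdiff_cancel hX], fun B hB => ?_⟩
  simp only [disjointSum_isBase_iff, restrict_ground_eq, contract_ground, isBase_restrict_iff hX,
    union_sdiff_cancel hX] at hB
  obtain ⟨hBX, hBc, hBE⟩ := hB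
  have hB := (hBX.contract_isBase_iff.1 hBc).1
  rwa [← inter_union_distrib_left, sdiff_union_self, union_eq_left.2 hX,
    inter_eq_self_of_subset_left hBE] at hB

lemma weakLE_of_isFreeProduct_restrict_contract (hX : X ⊆ M.E)
    (hF : IsFreeProduct (M ↾ X) (M ／ X) F) : weakLE M F := by
  refine ⟨by simp [hF.1, union_sdiff_cancel hX], fun B hB => ?_⟩
  have hBE := hB.subset_ground
  rw [hF.2, restrict_ground_eq, contract_ground, union_sdiff_cancel hX, erank_eq_eRank,
    erank_eq_eRank, eRank_restrict, eRk_add_eRank_contract hX, hB.encard_eq_eRank,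
    ← inter_sdiff_assoc, inter_eq_self_of_subset_left hBE]
  exact ⟨hBE, rfl, restrict_indep_iff.2 ⟨hB.indep.inter_right X, inter_subset_right⟩,
    hB.spanning.contract X⟩

end Matroid

theorem restriction_contraction_weak_order_general
    (M : Matroid α) (U : Set α) (hU : U ⊆ M.E)
    (hdis : Disjoint (M ↾ U).E (M.con U).E)
    (F : Matroid α) (hF : IsFreeProduct (M ↾ U) (M.con U) F) :
    weakLE ((M ↾ U).disjointSum (M.con U) hdis) M ∧ weakLE M F :=
  ⟨disjointSum_restrict_contract_weakLE hU hdis, weakLE_of_isFreeProduct_restrict_contract hU hF⟩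

/-- for any matroid `M` on a finite set `S` and any `U ⊆ S`, one has
`M|U ⊕ M/U ≤ M ≤ M|U □ M/U` in the rank-preserving weak order on matroids on `S`. -/
theorem restriction_contraction_weak_order
    (M : Matroid α) (hE : M.E.Finite) (U : Set α) (hU : U ⊆ M.E)
    (hdis : Disjoint (M ↾ U).E (M.con U).E)
    (F : Matroid α) (hF : IsFreeProduct (M ↾ U) (M.con U) F) :
    weakLE ((M ↾ U).disjointSum (M.con U) hdis) M ∧ weakLE M F :=
  restriction_contraction_weak_order_general M U hU hdis F hF
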